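/- Let n be a normalizer of M and x₀ a character of M. Then y(n*n) = 0 for every character y in the pseudo-orbit 𝒢(x₀) if and only if y(n n*) = 0 for every y ∈ 𝒢(x₀). -/
import Mathlib


open scoped ComplexOrder InnerProductSpace

variable {A : Type*} [NormedRing A] [StarRing A] [CStarRing A]
  [NormedAlgebra ℂ A] [CompleteSpace A] [StarModule ℂ A]
  [PartialOrder A] [StarOrderedRing A]

/-- `n` is a normalizer of the subalgebra `M`: `n* M n ⊆ M` and `n M n* ⊆ M`
(in particular `n*n ∈ M` and `n n* ∈ M`, taking `h = 1`). -/
structure IsNormalizer (M : StarSubalgebra ℂ A) (n : A) : Prop where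
  conj_mem : ∀ h ∈ M, star n * h * n ∈ M
  conj_mem' : ∀ h ∈ M, n * h * star n ∈ M
  sq_mem : star n * n ∈ M
  sq_mem' : n * star n ∈ M

/-- `y = αₙ(x)`: the character `y` satisfies `x(n* h n) = y(h) · x(n*n)` for all `h ∈ M`. -/
def IsAlpha (M : StarSubalgebra ℂ A) (n : A) (hn : IsNormalizer M n)
    (x y : M →⋆ₐ[ℂ] ℂ) : Prop :=
  ∀ h : M, x ⟨star n * (h : A) * n, hn.conj_mem (h : A) h.2⟩
    = y h * x ⟨star n * n, hn.sq_mem⟩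

/-- `y` lies in the pseudo-orbit `𝒢(x₀)`: there is a normalizer `m` of `M` with
`x₀(m*m) ≠ 0` and `y = α_m(x₀)`. -/
def InPseudoOrbit (M : StarSubalgebra ℂ A) (x₀ y : M →⋆ₐ[ℂ] ℂ) : Prop :=
  ∃ m, ∃ hm : IsNormalizer M m,
    x₀ ⟨star m * m, hm.sq_mem⟩ ≠ 0 ∧ IsAlpha M m hm x₀ y

lemma IsNormalizer.star' {M : StarSubalgebra ℂ A} {n : A} (hn : IsNormalizer M n) :
    IsNormalizer M (star n) where
  conj_mem h hh := by simpa [star_star] using hn.conj_mem' h hh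
  conj_mem' h hh := by simpa [star_star] using hn.conj_mem h hh
  sq_mem := by simpa [star_star] using hn.sq_mem'
  sq_mem' := by simpa [star_star] using hn.sq_mem

lemma IsNormalizer.mul {M : StarSubalgebra ℂ A} {a b : A}
    (ha : IsNormalizer M a) (hb : IsNormalizer M b) : IsNormalizer M (a * b) where
  conj_mem h hh := by
    have : star (a * b) * h * (a * b) = star b * (star a * h * a) * b := by
      simp [star_mul, mul_assoc]
    rw [this]; exact hb.conj_mem _ (ha.conj_mem h hh)
  conj_mem' h hh := by
    have : (a * b) * h * star (a * b) = a * (b * h * star b) * star a := by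
      simp [star_mul, mul_assoc]
    rw [this]; exact ha.conj_mem' _ (hb.conj_mem' h hh)
  sq_mem := by
    have : star (a * b) * (a * b) = star b * (star a * a) * b := by
      simp [star_mul, mul_assoc]
    rw [this]; exact hb.conj_mem _ ha.sq_mem
  sq_mem' := by
    have : (a * b) * star (a * b) = a * (b * star b) * star a := by
      simp [star_mul, mul_assoc]
    rw [this]; exact ha.conj_mem' _ hb.sq_mem'

set_option synthInstance.maxHeartbeats 1000000 in
/-- If `x(m*m) ≠ 0` for a normalizer `m`, then the character `α_m(x)` exists. -/
lemma exists_alpha (M : StarSubalgebra ℂ A)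
    (hMcomm : ∀ a ∈ M, ∀ b ∈ M, a * b = b * a)
    (m : A) (hm : IsNormalizer M m) (x : M →⋆ₐ[ℂ] ℂ)
    (hx : x ⟨star m * m, hm.sq_mem⟩ ≠ 0) :
    ∃ y : M →⋆ₐ[ℂ] ℂ, IsAlpha M m hm x y := by
  set c : ℂ := x ⟨star m * m, hm.sq_mem⟩ with hc
  refine ⟨{
    toFun := fun h => x ⟨star m * (h : A) * m, hm.conj_mem _ h.2⟩ * c⁻¹
    map_one' := by
      have e : (⟨star m * ((1 : M) : A) * m, hm.conj_mem _ (one_mem M)⟩ : M)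
          = ⟨star m * m, hm.sq_mem⟩ := Subtype.ext (by simp)
      rw [e, ← hc, mul_inv_cancel₀ hx]
    map_mul' := fun h k => by
      have hcomm : (k : A) * (m * star m) = (m * star m) * (k : A) :=
        hMcomm _ k.2 _ hm.sq_mem'
      have e : (⟨star m * ((h * k : M) : A) * m, hm.conj_mem _ (h * k).2⟩ : M)
            * ⟨star m * m, hm.sq_mem⟩
          = (⟨star m * (h : A) * m, hm.conj_mem _ h.2⟩ : M)
            * ⟨star m * (k : A) * m, hm.conj_mem _ k.2⟩ := by
        refine Subtype.ext ?_
        show (star m * ((h : A) * (k : A)) * m) * (star m * m)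
            = (star m * (h : A) * m) * (star m * (k : A) * m)
        calc (star m * ((h : A) * (k : A)) * m) * (star m * m)
            = star m * (h : A) * ((k : A) * (m * star m)) * m := by noncomm_ring
          _ = star m * (h : A) * ((m * star m) * (k : A)) * m := by rw [hcomm]
          _ = (star m * (h : A) * m) * (star m * (k : A) * m) := by noncomm_ring
      have e2 := congrArg x e
      rw [map_mul, map_mul, ← hc] at e2
      push_cast at e2 ⊢
      have e3 : x ⟨star m * ((h : A) * (k : A)) * m, hm.conj_mem _ (h * k).2⟩
          = x ⟨star m * (h : A) * m, hm.conj_mem _ h.2⟩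
            * x ⟨star m * (k : A) * m, hm.conj_mem _ k.2⟩ * c⁻¹ := by
        rw [← e2, mul_inv_cancel_right₀ hx]
      rw [e3]; ring
    map_zero' := by
      have e : (⟨star m * ((0 : M) : A) * m, hm.conj_mem _ (zero_mem M)⟩ : M) = 0 :=
        Subtype.ext (by simp)
      rw [e, map_zero, zero_mul]
    map_add' := fun h k => by
      have e : (⟨star m * ((h + k : M) : A) * m, hm.conj_mem _ (h + k).2⟩ : M)
          = ⟨star m * (h : A) * m, hm.conj_mem _ h.2⟩
            + ⟨star m * (k : A) * m, hm.conj_mem _ k.2⟩ :=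
        Subtype.ext (by push_cast; noncomm_ring)
      rw [e, map_add, add_mul]
    commutes' := fun r => by
      have e : (⟨star m * ((algebraMap ℂ M r : M) : A) * m,
            hm.conj_mem _ (algebraMap ℂ M r).2⟩ : M)
          = algebraMap ℂ M r * ⟨star m * m, hm.sq_mem⟩ := by
        refine Subtype.ext ?_
        show star m * (algebraMap ℂ A r) * m = algebraMap ℂ A r * (star m * m)
        rw [← Algebra.commutes r (star m), mul_assoc]
      rw [e, map_mul, AlgHomClass.commutes, ← hc]
      simp [mul_assoc, mul_inv_cancel₀ hx]
    map_star' := fun h => by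
      have e : (⟨star m * ((star h : M) : A) * m, hm.conj_mem _ (star h).2⟩ : M)
          = star ⟨star m * (h : A) * m, hm.conj_mem _ h.2⟩ :=
        Subtype.ext (by simp [star_mul, star_star, mul_assoc])
      have hcr : star c = c := by
        rw [hc, ← map_star]
        congr 1
        exact Subtype.ext (by simp [star_mul, star_star, mul_assoc])
      rw [e, map_star, star_mul', star_inv₀, hcr] }, ?_⟩
  intro h
  show x ⟨star m * (h : A) * m, hm.conj_mem _ h.2⟩
      = x ⟨star m * (h : A) * m, hm.conj_mem _ h.2⟩ * c⁻¹ * c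
  exact (inv_mul_cancel_right₀ hx _).symm

lemma key_direction (M : StarSubalgebra ℂ A)
    (hMcomm : ∀ a ∈ M, ∀ b ∈ M, a * b = b * a)
    (n : A) (hn : IsNormalizer M n) (x₀ : M →⋆ₐ[ℂ] ℂ)
    (H : ∀ y : M →⋆ₐ[ℂ] ℂ, InPseudoOrbit M x₀ y → y ⟨star n * n, hn.sq_mem⟩ = 0) :
    ∀ y : M →⋆ₐ[ℂ] ℂ, InPseudoOrbit M x₀ y → y ⟨n * star n, hn.sq_mem'⟩ = 0 := by
  intro y ⟨m, hm, hx, halpha⟩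
  by_contra hy
  set m' : A := star n * m with hm'def
  have hm' : IsNormalizer M m' := hn.star'.mul hm
  have e1 : (⟨star m' * m', hm'.sq_mem⟩ : M)
      = ⟨star m * (n * star n) * m, hm.conj_mem _ hn.sq_mem'⟩ :=
    Subtype.ext (by simp [hm'def, star_mul, star_star, mul_assoc])
  have h1 : x₀ ⟨star m' * m', hm'.sq_mem⟩ ≠ 0 := by
    rw [e1, halpha ⟨n * star n, hn.sq_mem'⟩]
    exact mul_ne_zero hy hx
  obtain ⟨y', hy'⟩ := exists_alpha M hMcomm m' hm' x₀ h1
  have h0 : y' ⟨star n * n, hn.sq_mem⟩ = 0 := H y' ⟨m', hm', h1, hy'⟩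
  have h2 := hy' ⟨star n * n, hn.sq_mem⟩
  rw [h0, zero_mul] at h2
  have e2 : (⟨star m' * ((⟨star n * n, hn.sq_mem⟩ : M) : A) * m',
        hm'.conj_mem _ hn.sq_mem⟩ : M)
      = ⟨star m * ((n * star n) * (n * star n)) * m,
        hm.conj_mem _ (mul_mem hn.sq_mem' hn.sq_mem')⟩ :=
    Subtype.ext (by simp [hm'def, star_mul, star_star, mul_assoc])
  rw [e2, halpha ⟨(n * star n) * (n * star n), mul_mem hn.sq_mem' hn.sq_mem'⟩] at h2
  have e3 : (⟨(n * star n) * (n * star n), mul_mem hn.sq_mem' hn.sq_mem'⟩ : M)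
      = ⟨n * star n, hn.sq_mem'⟩ * ⟨n * star n, hn.sq_mem'⟩ := rfl
  rw [e3, map_mul] at h2
  exact mul_ne_zero (mul_ne_zero hy hy) hx h2

/-- For a normalizer `n` of `M` and a character `x₀` of `M`, `n*n` vanishes on the
pseudo-orbit `𝒢(x₀)` if and only if `n n*` vanishes on `𝒢(x₀)`. -/
theorem nstarn_vanishes_on_pseudoOrbit_iff
    (M : StarSubalgebra ℂ A) (hMclosed : IsClosed (M : Set A))
    (hMcomm : ∀ a ∈ M, ∀ b ∈ M, a * b = b * a)
    (n : A) (hn : IsNormalizer M n)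
    (x₀ : M →⋆ₐ[ℂ] ℂ) :
    (∀ y : M →⋆ₐ[ℂ] ℂ, InPseudoOrbit M x₀ y → y ⟨star n * n, hn.sq_mem⟩ = 0) ↔
    (∀ y : M →⋆ₐ[ℂ] ℂ, InPseudoOrbit M x₀ y → y ⟨n * star n, hn.sq_mem'⟩ = 0) := by
  constructor
  · exact key_direction M hMcomm n hn x₀
  · intro H y hy
    have H' : ∀ y : M →⋆ₐ[ℂ] ℂ, InPseudoOrbit M x₀ y →
        y ⟨star (star n) * star n, hn.star'.sq_mem⟩ = 0 := by
      intro y hy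
      have e : (⟨star (star n) * star n, hn.star'.sq_mem⟩ : M)
          = ⟨n * star n, hn.sq_mem'⟩ := Subtype.ext (by simp)
      rw [e]; exact H y hy
    have := key_direction M hMcomm (star n) hn.star' x₀ H' y hy
    have e : (⟨star n * n, hn.sq_mem⟩ : M)
        = ⟨star n * star (star n), hn.star'.sq_mem'⟩ := Subtype.ext (by simp)
    rw [e]; exact this
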